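/- arXiv:1007.2952 — 5 statements merged into one kernel-verified Lean document; each statement's English description precedes it below -/
import Mathlib

section
/- There exists a classical deterministic winning strategy for the matching game for m = 4; that is, there exist functions s_A : {0,1}^4 → {0,1}^2 and s_B assigning to each perfect matching y on {0,1,2,3} a pair (b₁, b₂) with y b₁ = b₂ and a string t ∈ {0,1}^2, such that for every x ∈ {0,1}^4 and every perfect matching y, with (b₁, b₂, t) = s_B(y), one has x_{b₁} ⊕ x_{b₂} = ⨁_{k=0}^{1} ((bin(b₁)_k ⊕ bin(b₂)_k) ∧ (s_A(x)_k ⊕ t_k)). -/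
/-!
The three pairs inside `{0, 1, 2}` have binary differences `01`, `10`, `11`, the three nonzero
vectors of `𝔽₂²`, and the parities `x₀ + x₁`, `x₀ + x₂`, `x₁ + x₂` they ask for add up like those
vectors do. So Alice can send the linear form taking the value `x₀ + x₁` at `01` and `x₀ + x₂`
at `10`, i.e. `(x₀ + x₂, x₀ + x₁)`, and Bob answers with `t = 0` about a pair of the matching
avoiding `3`: the pair of `0` unless it is `{0, 3}`, in which case the other pair is `{1, 2}`.
-/

/-- The `k`-th bit (big-endian, most significant first) of the `L`-bit binary
representation of `b`, viewed as an element of `ZMod 2`. -/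
def binRep (L b : ℕ) (k : Fin L) : ZMod 2 :=
  if Nat.testBit b (L - 1 - k.val) then 1 else 0

/-- A perfect matching on `{0, …, m-1}`, encoded as a fixed-point-free
involution `y : Fin m → Fin m`. -/
def Matching (m : ℕ) : Type :=
  {y : Fin m → Fin m // y ∘ y = id ∧ ∀ i, y i ≠ i}

namespace Matching

variable {m : ℕ} (y : Matching m)

theorem apply_apply (i : Fin m) : y.val (y.val i) = i := congrFun y.2.1 i

theorem apply_ne (i : Fin m) : y.val i ≠ i := y.2.2 i

theorem apply_eq_comm {i j : Fin m} : y.val i = j ↔ y.val j = i :=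
  ⟨fun h => h ▸ y.apply_apply i, fun h => h ▸ y.apply_apply j⟩

end Matching

theorem Matching.apply_one_eq_two_of_apply_zero_eq_three (y : Matching 4) (h : y.val 0 = 3) :
    y.val 1 = 2 := by
  have h₃ : y.val 3 = 0 := y.apply_eq_comm.mp h
  have h₁₁ := y.apply_ne 1
  have h₁₀ : y.val 1 ≠ 0 := fun h' => by simp [y.apply_eq_comm.mp h'] at h
  have h₁₃ : y.val 1 ≠ 3 := fun h' => by simp [y.apply_eq_comm.mp h'] at h₃
  generalize y.val 1 = j at *
  fin_cases j <;> simp_all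

def aliceMessage (x : Fin 4 → ZMod 2) : Fin 2 → ZMod 2 := ![x 0 + x 2, x 0 + x 1]

theorem add_eq_sum_binRep_mul_aliceMessage {b₁ b₂ : Fin 4} (h₁ : b₁ ≠ 3) (h₂ : b₂ ≠ 3)
    (hne : b₁ ≠ b₂) (x : Fin 4 → ZMod 2) :
    x b₁ + x b₂ = ∑ k, (binRep 2 b₁ k + binRep 2 b₂ k) * aliceMessage x k := by
  fin_cases b₁ <;> fin_cases b₂ <;>
    simp_all +decide [binRep, aliceMessage, Fin.sum_univ_two] <;> ring_nf <;> reduce_mod_char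

def bobPair (y : Matching 4) : Fin 4 × Fin 4 :=
  if y.val 0 = 3 then (1, 2) else (0, y.val 0)

theorem bobPair_spec (y : Matching 4) :
    y.val (bobPair y).1 = (bobPair y).2 ∧ (bobPair y).1 ≠ 3 ∧ (bobPair y).2 ≠ 3 ∧
      (bobPair y).1 ≠ (bobPair y).2 := by
  unfold bobPair
  split_ifs with h
  · exact ⟨y.apply_one_eq_two_of_apply_zero_eq_three h, by decide, by decide, by decide⟩
  · exact ⟨rfl, by simp, h, (y.apply_ne 0).symm⟩

/-- There is a classical deterministic winning strategy for the matching game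
for `m = 4` (with `L = ⌈log₂ 4⌉ = 2`).  In `ZMod 2`, `+` is XOR and `*` is AND. -/
theorem matching_game_classical_winning_strategy_m4 :
    ∃ (sA : (Fin 4 → ZMod 2) → (Fin 2 → ZMod 2))
      (sB : Matching 4 → Fin 4 × Fin 4 × (Fin 2 → ZMod 2)),
      ∀ y : Matching 4,
        y.val (sB y).1 = (sB y).2.1 ∧
        ∀ x : Fin 4 → ZMod 2,
          x (sB y).1 + x (sB y).2.1 =
            ∑ k : Fin 2,
              (binRep 2 ((sB y).1).val k + binRep 2 ((sB y).2.1).val k) *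
                (sA x k + (sB y).2.2 k) := by
  refine ⟨aliceMessage, fun y => ((bobPair y).1, (bobPair y).2, 0), fun y => ?_⟩
  obtain ⟨hy, h₁, h₂, hne⟩ := bobPair_spec y
  refine ⟨hy, fun x => ?_⟩
  simpa using add_eq_sum_binRep_mul_aliceMessage h₁ h₂ hne x
end

section
/- There exists a classical deterministic winning strategy for the matching game for m = 6; that is, there exist functions s_A : {0,1}^6 → {0,1}^3 and s_B assigning to each perfect matching y on {0,1,2,3,4,5} a pair (b₁, b₂) with y b₁ = b₂ and a string t ∈ {0,1}^3, such that for every x ∈ {0,1}^6 and every perfect matching y, with (b₁, b₂, t) = s_B(y), one has x_{b₁} ⊕ x_{b₂} = ⨁_{k=0}^{2} ((bin(b₁)_k ⊕ bin(b₂)_k) ∧ (s_A(x)_k ⊕ t_k)). -/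
/-!
Alice announces the parities `x 0 + x (2 ^ j)`, and Bob answers with an edge `{b₁, b₂}` of his
matching inside `S = {0} ∪ {2 ^ j : j < L}`. For `b ∈ S` the bits of `b` select exactly the
announced parity `x 0 + x b` (none of them when `b = 0`, where `x 0 + x 0 = 0`), so the sum over
`k` is `(x 0 + x b₁) + (x 0 + x b₂) = x b₁ + x b₂`. Such an edge exists as soon as `|S| = L + 1` exceeds the number
`m - (L + 1)` of vertices outside `S`, because the involution is injective; for `m = 6`, `L = 3`
this reads `2 < 4`.
-/

open Finset

theorem Finset.exists_mem_map_mem_of_card_compl_lt {α : Type*} [Fintype α] [DecidableEq α]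
    {f : α → α} (hf : f.Injective) {s : Finset α} (hs : #sᶜ < #s) : ∃ i ∈ s, f i ∈ s := by
  by_contra! h
  exact hs.not_ge (card_le_card_of_injOn f (fun i hi => by simpa using h i hi) hf.injOn)

theorem Matching.injective {m : ℕ} (y : Matching m) : y.val.Injective :=
  Function.LeftInverse.injective (congrFun y.property.1)

section
variable {L m : ℕ} (hm : 2 ^ (L - 1) < m)

theorem binRep_two_pow (j k : Fin L) : binRep L (2 ^ (L - 1 - j)) k = if j = k then 1 else 0 := by
  have : L - 1 - (j : ℕ) = L - 1 - k ↔ j = k := by omega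
  simp [binRep, Nat.testBit_two_pow, this]

def baseVertex : Fin m := ⟨0, Nat.zero_lt_of_lt hm⟩

/-- In big-endian `L`-bit representation, `2 ^ (L - 1 - k)` is the `k`-th unit vector. -/
def unitVertex (k : Fin L) : Fin m :=
  ⟨2 ^ (L - 1 - k), (Nat.pow_le_pow_right two_pos (by omega)).trans_lt hm⟩

theorem unitVertex_injective : (unitVertex hm).Injective := by
  intro j k h
  have := Nat.pow_right_injective le_rfl (Fin.val_eq_of_eq h)
  omega

theorem unitVertex_ne_baseVertex (k : Fin L) : unitVertex hm k ≠ baseVertex hm :=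
  Fin.ne_of_val_ne (pow_pos two_pos _).ne'

def keyVertices : Finset (Fin m) :=
  insert (baseVertex hm) (univ.image (unitVertex hm))

theorem card_keyVertices : #(keyVertices hm) = L + 1 := by
  rw [keyVertices, card_insert_of_notMem, card_image_of_injective _ (unitVertex_injective hm),
    card_univ, Fintype.card_fin]
  simpa using unitVertex_ne_baseVertex hm

def aliceStrategy (x : Fin m → ZMod 2) (k : Fin L) : ZMod 2 :=
  x (baseVertex hm) + x (unitVertex hm k)

theorem sum_binRep_mul_aliceStrategy {b : Fin m}
    (hb : b ∈ keyVertices hm) (x : Fin m → ZMod 2) :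
    ∑ k, binRep L b k * aliceStrategy hm x k = x (baseVertex hm) + x b := by
  rcases mem_insert.1 hb with rfl | hb
  · simp [baseVertex, binRep, CharTwo.add_self_eq_zero]
  · obtain ⟨j, -, rfl⟩ := mem_image.1 hb
    simp [unitVertex, binRep_two_pow, aliceStrategy]

theorem aliceStrategy_wins {b₁ b₂ : Fin m}
    (hb₁ : b₁ ∈ keyVertices hm) (hb₂ : b₂ ∈ keyVertices hm) (x : Fin m → ZMod 2) :
    x b₁ + x b₂ = ∑ k, (binRep L b₁ k + binRep L b₂ k) * (aliceStrategy hm x k + 0) := by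
  simp only [add_zero, add_mul, sum_add_distrib, sum_binRep_mul_aliceStrategy hm hb₁,
    sum_binRep_mul_aliceStrategy hm hb₂]
  linear_combination (-1 : ZMod 2) * CharTwo.add_self_eq_zero (x (baseVertex hm))

theorem exists_pair_mem_keyVertices (hmL : m < 2 * (L + 1)) (y : Matching m) :
    ∃ b ∈ keyVertices hm, y.val b ∈ keyVertices hm := by
  refine exists_mem_map_mem_of_card_compl_lt y.injective ?_
  rw [card_compl, Fintype.card_fin, card_keyVertices]
  omega

end

theorem matching_game_exists_winning_strategy {L m : ℕ} (hm : 2 ^ (L - 1) < m)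
    (hmL : m < 2 * (L + 1)) :
    ∃ (sA : (Fin m → ZMod 2) → (Fin L → ZMod 2))
      (sB : Matching m → Fin m × Fin m × (Fin L → ZMod 2)),
      ∀ y : Matching m,
        y.val (sB y).1 = (sB y).2.1 ∧
        ∀ x : Fin m → ZMod 2,
          x (sB y).1 + x (sB y).2.1 =
            ∑ k : Fin L,
              (binRep L ((sB y).1).val k + binRep L ((sB y).2.1).val k) *
                (sA x k + (sB y).2.2 k) := by
  choose b hb hyb using exists_pair_mem_keyVertices hm hmL
  exact ⟨aliceStrategy hm, fun y => (b y, y.val (b y), 0),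
    fun y => ⟨rfl, aliceStrategy_wins hm (hb y) (hyb y)⟩⟩

/-- There is a classical deterministic winning strategy for the matching game
for `m = 6` (with `L = ⌈log₂ 6⌉ = 3`).  In `ZMod 2`, `+` is XOR and `*` is AND. -/
theorem matching_game_classical_winning_strategy_m6 :
    ∃ (sA : (Fin 6 → ZMod 2) → (Fin 3 → ZMod 2))
      (sB : Matching 6 → Fin 6 × Fin 6 × (Fin 3 → ZMod 2)),
      ∀ y : Matching 6,
        y.val (sB y).1 = (sB y).2.1 ∧
        ∀ x : Fin 6 → ZMod 2,
          x (sB y).1 + x (sB y).2.1 =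
            ∑ k : Fin 3,
              (binRep 3 ((sB y).1).val k + binRep 3 ((sB y).2.1).val k) *
                (sA x k + (sB y).2.2 k) :=
  matching_game_exists_winning_strategy (by norm_num) (by norm_num)
end

section
/- Let m ≥ 8 be an even integer and L = ⌈log₂ m⌉. There is no classical deterministic winning strategy for the matching game for m; that is, there do not exist functions s_A : {0,1}^m → {0,1}^L and s_B assigning to each perfect matching y on {0,…,m−1} a pair (b₁, b₂) with y b₁ = b₂ and a string t ∈ {0,1}^L, such that for every x ∈ {0,1}^m and every perfect matching y, with (b₁, b₂, t) = s_B(y), one has x_{b₁} ⊕ x_{b₂} = ⨁_{k=0}^{L−1} ((bin(b₁)_k ⊕ bin(b₂)_k) ∧ (s_A(x)_k ⊕ t_k)). -/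
/-!
Subtracting Alice's answer to `x = 0` from her answer to `x = eⱼ` turns a winning strategy
into a matrix `A` over `𝔽₂` such that, for every matching `y`, Bob's pair `(b, y b)` has equal
labels, where `label a = A · bin(a) + eₐ ∈ 𝔽₂ᵐ`. The unit vectors `eₐ` of one label class `w`
lie in `span {w} + range A`, of dimension at most `L + 1`, so every class has at most
`L + 1 ≤ m / 2` points. Sorting the points by label and pairing `i` with `i + m / 2` then gives a
matching that never pairs two points with the same label.
-/

open Finset Module Matrix

lemma Nat.clog_two_mul_add_one_le {h : ℕ} (hh : 4 ≤ h) : Nat.clog 2 (2 * h) + 1 ≤ h := by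
  obtain ⟨k, rfl⟩ := Nat.exists_eq_add_of_le' hh
  have hk := Nat.lt_two_pow_self (n := k)
  have : 2 * (k + 4) ≤ 2 ^ (k + 3) := by rw [pow_add]; omega
  have := Nat.clog_le_of_le_pow this
  omega

theorem card_filter_apply_add_single_eq_le {K ι E : Type*} [Field K] [DecidableEq K]
    [Fintype ι] [DecidableEq ι] [AddCommGroup E] [Module K E] [FiniteDimensional K E]
    (M : E →ₗ[K] ι → K) (u : ι → E) (w : ι → K) :
    #{i | M (u i) + Pi.single i 1 = w} ≤ finrank K E + 1 := by
  set s : Finset ι := {i | M (u i) + Pi.single i 1 = w}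
  have hli : LinearIndependent K fun i : s ↦ (Pi.single (i : ι) (1 : K) : ι → K) :=
    (Pi.linearIndependent_single_one ι K).comp _ Subtype.val_injective
  have hspan : Submodule.span K (Set.range fun i : s ↦ (Pi.single (i : ι) (1 : K) : ι → K))
      ≤ (K ∙ w) ⊔ LinearMap.range M := by
    rw [Submodule.span_le]
    rintro _ ⟨i, rfl⟩
    have hi : M (u i) + Pi.single (i : ι) 1 = w := (mem_filter.mp i.2).2
    show Pi.single (i : ι) (1 : K) ∈ (K ∙ w) ⊔ LinearMap.range M
    rw [eq_sub_of_add_eq' hi]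
    exact Submodule.sub_mem _ (Submodule.mem_sup_left (Submodule.mem_span_singleton_self w))
      (Submodule.mem_sup_right (LinearMap.mem_range_self M _))
  calc #s = finrank K (Submodule.span K
          (Set.range fun i : s ↦ (Pi.single (i : ι) (1 : K) : ι → K))) := by
        rw [finrank_span_eq_card hli, Fintype.card_coe]
    _ ≤ finrank K ↥((K ∙ w) ⊔ LinearMap.range M) := Submodule.finrank_mono hspan
    _ ≤ finrank K (K ∙ w) + finrank K (LinearMap.range M) :=
        Submodule.finrank_add_le_finrank_add_finrank _ _
    _ ≤ 1 + finrank K E := by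
        gcongr
        · simpa using finrank_span_le_card (R := K) ({w} : Set (ι → K))
        · exact LinearMap.finrank_range_le M
    _ = finrank K E + 1 := add_comm _ _

def Fin.swapHalves (h : ℕ) (j : Fin (2 * h)) : Fin (2 * h) :=
  ⟨if j.val < h then j.val + h else j.val - h, by split_ifs <;> omega⟩

lemma Fin.swapHalves_involutive (h : ℕ) : Function.Involutive (Fin.swapHalves h) := by
  intro j
  ext
  simp only [Fin.swapHalves]
  split_ifs <;> omega

lemma Monotone.apply_swapHalves_ne {β : Type*} [PartialOrder β] [DecidableEq β] {h : ℕ}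
    {g : Fin (2 * h) → β} (hg : Monotone g) (hfib : ∀ b, #{i | g i = b} ≤ h)
    (j : Fin (2 * h)) : g (Fin.swapHalves h j) ≠ g j := by
  wlog hj : j.val < h generalizing j
  · have hj' : (Fin.swapHalves h j).val < h := by simp only [Fin.swapHalves, if_neg hj]; omega
    have := this _ hj'
    rwa [Fin.swapHalves_involutive, ne_comm] at this
  intro heq
  have hval : (Fin.swapHalves h j).val = j.val + h := by simp [Fin.swapHalves, hj]
  have hsub : Icc j (Fin.swapHalves h j) ⊆ ({i | g i = g j} : Finset _) := fun c hc ↦ by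
    rw [mem_Icc] at hc
    rw [mem_filter]
    exact ⟨mem_univ c, le_antisymm (heq ▸ hg hc.2) (hg hc.1)⟩
  have := (card_le_card hsub).trans (hfib (g j))
  rw [Fin.card_Icc, hval] at this
  omega

theorem Fin.exists_involutive_apply_ne {β : Type*} [DecidableEq β] (h : ℕ) (g : Fin (2 * h) → β)
    (hfib : ∀ b, #{i | g i = b} ≤ h) :
    ∃ y : Fin (2 * h) → Fin (2 * h), Function.Involutive y ∧ ∀ i, g (y i) ≠ g i := by
  -- any linear order will do: sorting only makes the fibres of `g` contiguous
  let : LinearOrder β := IsWellOrder.linearOrder WellOrderingRel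
  have hfibσ : ∀ b, #{i | (g ∘ Tuple.sort g) i = b} ≤ h := fun b ↦
    (card_equiv (Tuple.sort g) fun i ↦ by simp).trans_le (hfib b)
  refine ⟨Tuple.sort g ∘ Fin.swapHalves h ∘ (Tuple.sort g).symm, fun i ↦ ?_, fun i ↦ ?_⟩
  · simp [Fin.swapHalves_involutive _ _]
  · have := (Tuple.monotone_sort g).apply_swapHalves_ne hfibσ ((Tuple.sort g).symm i)
    simpa only [Function.comp_apply, Equiv.apply_symm_apply] using this

def answerMatrix {m L : ℕ} (sA : (Fin m → ZMod 2) → Fin L → ZMod 2) :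
    Matrix (Fin m) (Fin L) (ZMod 2) :=
  Matrix.of fun j k ↦ sA (Pi.single j 1) k + sA 0 k

lemma answerMatrix_mulVec_add_single_eq {m L : ℕ} (sA : (Fin m → ZMod 2) → Fin L → ZMod 2)
    {b₁ b₂ : Fin m} (t : Fin L → ZMod 2)
    (hwin : ∀ x : Fin m → ZMod 2,
      x b₁ + x b₂ = ∑ k, (binRep L b₁ k + binRep L b₂ k) * (sA x k + t k)) :
    answerMatrix sA *ᵥ binRep L b₁ + Pi.single b₁ 1 =
      answerMatrix sA *ᵥ binRep L b₂ + Pi.single b₂ 1 := by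
  ext j
  have hsplit : ∀ k, (binRep L b₁ k + binRep L b₂ k) * (sA (Pi.single j 1) k + sA 0 k) =
      (binRep L b₁ k + binRep L b₂ k) * (sA (Pi.single j 1) k + t k) +
        (binRep L b₁ k + binRep L b₂ k) * (sA 0 k + t k) := fun k ↦ by grind
  have key : ∑ k, (binRep L b₁ k + binRep L b₂ k) * (sA (Pi.single j 1) k + sA 0 k) =
      (Pi.single b₁ 1 : Fin m → ZMod 2) j + (Pi.single b₂ 1 : Fin m → ZMod 2) j := by
    rw [sum_congr rfl fun k _ ↦ hsplit k, sum_add_distrib, ← hwin, ← hwin 0]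
    simp [Pi.single_apply, eq_comm]
  simp only [add_mul, sum_add_distrib] at key
  simp only [Pi.add_apply, mulVec, dotProduct, answerMatrix, of_apply, mul_comm]
  grind

/-- For even `m ≥ 8` (with `L = ⌈log₂ m⌉ = Nat.clog 2 m`) there is no classical
deterministic winning strategy for the matching game for `m`.
In `ZMod 2`, `+` is XOR and `*` is AND. -/
theorem matching_game_no_classical_winning_strategy (m : ℕ) (hm : 8 ≤ m) (hme : Even m) :
    ¬ ∃ (sA : (Fin m → ZMod 2) → (Fin (Nat.clog 2 m) → ZMod 2))
        (sB : Matching m → Fin m × Fin m × (Fin (Nat.clog 2 m) → ZMod 2)),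
        ∀ y : Matching m,
          y.val (sB y).1 = (sB y).2.1 ∧
          ∀ x : Fin m → ZMod 2,
            x (sB y).1 + x (sB y).2.1 =
              ∑ k : Fin (Nat.clog 2 m),
                (binRep (Nat.clog 2 m) ((sB y).1).val k +
                  binRep (Nat.clog 2 m) ((sB y).2.1).val k) *
                  (sA x k + (sB y).2.2 k) := by
  rintro ⟨sA, sB, hwin⟩
  obtain ⟨h, rfl⟩ := hme.two_dvd
  let label (a : Fin (2 * h)) : Fin (2 * h) → ZMod 2 :=
    answerMatrix sA *ᵥ binRep (Nat.clog 2 (2 * h)) a + Pi.single a 1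
  have hfib (w : Fin (2 * h) → ZMod 2) : #{a | label a = w} ≤ h := by
    have := card_filter_apply_add_single_eq_le (answerMatrix sA).mulVecLin
      (fun a ↦ binRep (Nat.clog 2 (2 * h)) a) w
    rw [finrank_fin_fun] at this
    exact this.trans (Nat.clog_two_mul_add_one_le (by omega))
  obtain ⟨y, hy, hne⟩ := Fin.exists_involutive_apply_ne h label hfib
  let Y : Matching (2 * h) := ⟨y, hy.comp_self, fun i hi ↦ hne i (congrArg label hi)⟩
  obtain ⟨hpair, hx⟩ := hwin Y
  refine hne (sB Y).1 ?_
  rw [show y (sB Y).1 = (sB Y).2.1 from hpair]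
  exact (answerMatrix_mulVec_add_single_eq sA _ hx).symm
end

section
/- Let m > 0 be an even integer and L = ⌈log₂ m⌉, and suppose (s_A, s_B) is a classical deterministic winning strategy for the matching game for m. Let G_s be the simple graph on vertex set {0,…,m−1} whose edges are exactly the pairs {b₁, b₂} that s_B outputs as its pair component on at least one perfect matching. Then there exists a set R of bit strings of length m such that simultaneously: (1) |R| ≥ 2^{m−L}; (2) G_s contains a connected component of cardinality greater than m/2; (3) for each edge {i, j} of G_s, the value r_i ⊕ r_j is the same for every r ∈ R. -/
open Finset

theorem exists_card_pow_sub_le_card_fiber {α : Type*} [Fintype α] [Nonempty α] [DecidableEq α]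
    {m L : ℕ} (hLm : L ≤ m) (f : (Fin m → α) → (Fin L → α)) :
    ∃ a, Fintype.card α ^ (m - L) ≤ #{x | f x = a} := by
  refine Fintype.exists_le_card_fiber_of_mul_le_card f ?_
  simp only [Fintype.card_fun, Fintype.card_fin, ← pow_add, Nat.add_sub_cancel' hLm, le_rfl]

theorem lt_of_monotone_comp_of_ncard_fiber_le {n h : ℕ} {β : Type*} [LinearOrder β]
    {f : Fin n → β} {σ : Equiv.Perm (Fin n)} (hmono : Monotone (f ∘ σ))
    (hf : ∀ b, (f ⁻¹' {b}).ncard ≤ h) {u v : Fin n} (huv : u.val + h ≤ v.val) :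
    f (σ u) < f (σ v) := by
  refine (hmono (show u ≤ v by rw [Fin.le_def]; omega)).lt_of_ne fun heq => ?_
  have hsub : σ '' (Icc u v : Set (Fin n)) ⊆ f ⁻¹' {f (σ u)} := by
    rintro _ ⟨i, hi, rfl⟩
    rw [coe_Icc, Set.mem_Icc] at hi
    exact le_antisymm ((hmono hi.2).trans heq.ge) (hmono hi.1)
  have hcard := Set.ncard_le_ncard hsub
  rw [Set.ncard_image_of_injective _ σ.injective, Set.ncard_coe_finset, Fin.card_Icc] at hcard
  have := hf (f (σ u))
  omega

theorem exists_matching_forall_ne_of_ncard_fiber_le {m : ℕ} (hm : Even m) {β : Type*}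
    (f : Fin m → β) (hf : ∀ b, (f ⁻¹' {b}).ncard ≤ m / 2) :
    ∃ y : Matching m, ∀ i, f (y.val i) ≠ f i := by
  obtain ⟨h, rfl⟩ := hm
  replace hf : ∀ b, (f ⁻¹' {b}).ncard ≤ h := fun b => (hf b).trans_eq (by omega)
  rcases h.eq_zero_or_pos with rfl | hh
  · exact ⟨⟨id, rfl, fun i => i.elim0⟩, fun i => i.elim0⟩
  have : NeZero (h + h) := ⟨by omega⟩
  let : LinearOrder β := WellOrderingRel.isWellOrder.linearOrder
  set σ := Tuple.sort f
  set c : Fin (h + h) := ⟨h, by omega⟩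
  have hcc : c + c = 0 := Fin.ext (by simp [Fin.val_add, c])
  have hc : c ≠ 0 := Fin.ne_of_val_ne (by simp [c]; omega)
  refine ⟨⟨fun i => σ (σ.symm i + c), ?_, ?_⟩, ?_⟩
  · funext i
    simp [add_assoc, hcc]
  · intro i hi
    exact hc (by simpa using congrArg σ.symm hi)
  · intro i
    obtain ⟨j, rfl⟩ := σ.surjective i
    simp only [Equiv.symm_apply_apply]
    have hsep (u v : Fin (h + h)) : u.val + h ≤ v.val → f (σ u) < f (σ v) :=
      lt_of_monotone_comp_of_ncard_fiber_le (Tuple.monotone_sort f) hf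
    have hdist : j.val + h = (j + c).val ∨ (j + c).val + h = j.val := by
      have hcval : c.val = h := rfl
      rw [Fin.val_add_eq_ite]
      split_ifs <;> omega
    rcases hdist with hup | hdown
    · exact (hsep _ _ hup.le).ne'
    · exact (hsep _ _ hdown.le).ne

theorem SimpleGraph.exists_half_lt_ncard_supp_of_forall_matching {m : ℕ} (hm : Even m)
    (G : SimpleGraph (Fin m)) (hG : ∀ y : Matching m, ∃ i, G.Adj i (y.val i)) :
    ∃ c : G.ConnectedComponent, m / 2 < c.supp.ncard := by
  by_contra! hsmall
  obtain ⟨y, hy⟩ := exists_matching_forall_ne_of_ncard_fiber_le hm G.connectedComponentMk hsmall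
  obtain ⟨i, hi⟩ := hG y
  exact hy i (ConnectedComponent.sound hi.reachable).symm

theorem matching_game_winning_strategy_gives_R_general (m : ℕ) (hme : Even m)
    (sA : (Fin m → ZMod 2) → (Fin (Nat.clog 2 m) → ZMod 2))
    (sB : Matching m → Fin m × Fin m × (Fin (Nat.clog 2 m) → ZMod 2))
    (hwin : ∀ y : Matching m,
      y.val (sB y).1 = (sB y).2.1 ∧
      ∀ x : Fin m → ZMod 2,
        x (sB y).1 + x (sB y).2.1 =
          ∑ k : Fin (Nat.clog 2 m),
            (binRep (Nat.clog 2 m) ((sB y).1).val k +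
              binRep (Nat.clog 2 m) ((sB y).2.1).val k) *
              (sA x k + (sB y).2.2 k))
    (G : SimpleGraph (Fin m))
    (hG : ∀ i j : Fin m, G.Adj i j ↔
      ∃ y : Matching m,
        ((sB y).1 = i ∧ (sB y).2.1 = j) ∨ ((sB y).1 = j ∧ (sB y).2.1 = i)) :
    ∃ R : Finset (Fin m → ZMod 2),
      2 ^ (m - Nat.clog 2 m) ≤ R.card ∧
      (∃ c : G.ConnectedComponent, (m : ℕ) / 2 < c.supp.ncard) ∧
      (∀ i j : Fin m, G.Adj i j → ∀ r ∈ R, ∀ r' ∈ R, r i + r j = r' i + r' j) := by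
  have hLm : Nat.clog 2 m ≤ m := Nat.clog_le_of_le_pow Nat.lt_two_pow_self.le
  obtain ⟨a, ha⟩ := exists_card_pow_sub_le_card_fiber hLm sA
  have hpair : ∀ y x x', sA x = sA x' →
      x (sB y).1 + x (sB y).2.1 = x' (sB y).1 + x' (sB y).2.1 := by
    intro y x x' hxx'
    rw [(hwin y).2 x, (hwin y).2 x', hxx']
  have hmeets (y : Matching m) : ∃ i, G.Adj i (y.val i) :=
    ⟨(sB y).1, (hwin y).1 ▸ (hG _ _).2 ⟨y, .inl ⟨rfl, rfl⟩⟩⟩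
  refine ⟨({x | sA x = a} : Finset _), ha,
    G.exists_half_lt_ncard_supp_of_forall_matching hme hmeets, ?_⟩
  intro i j hij r hr r' hr'
  have hrr' : sA r = sA r' := (mem_filter.1 hr).2.trans (mem_filter.1 hr').2.symm
  obtain ⟨y, ⟨rfl, rfl⟩ | ⟨rfl, rfl⟩⟩ := (hG i j).1 hij
  · exact hpair y r r' hrr'
  · rw [add_comm (r _), add_comm (r' _)]
    exact hpair y r r' hrr'

/-- Let `m > 0` be even, `L = ⌈log₂ m⌉`, and let `(sA, sB)` be a classical
deterministic winning strategy for the matching game for `m`.  Let `G` be the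
graph on `{0, …, m-1}` whose edges are exactly the pairs output by `sB` on at
least one perfect matching.  Then there is a set `R` of bit strings of
length `m` with `|R| ≥ 2^(m-L)`, such that `G` has a connected component of
cardinality greater than `m/2`, and for each edge `{i, j}` of `G` the value
`r i ⊕ r j` is the same for every `r ∈ R`. -/
theorem matching_game_winning_strategy_gives_R (m : ℕ) (hm : 0 < m) (hme : Even m)
    (sA : (Fin m → ZMod 2) → (Fin (Nat.clog 2 m) → ZMod 2))
    (sB : Matching m → Fin m × Fin m × (Fin (Nat.clog 2 m) → ZMod 2))
    (hwin : ∀ y : Matching m,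
      y.val (sB y).1 = (sB y).2.1 ∧
      ∀ x : Fin m → ZMod 2,
        x (sB y).1 + x (sB y).2.1 =
          ∑ k : Fin (Nat.clog 2 m),
            (binRep (Nat.clog 2 m) ((sB y).1).val k +
              binRep (Nat.clog 2 m) ((sB y).2.1).val k) *
              (sA x k + (sB y).2.2 k))
    (G : SimpleGraph (Fin m))
    (hG : ∀ i j : Fin m, G.Adj i j ↔
      ∃ y : Matching m,
        ((sB y).1 = i ∧ (sB y).2.1 = j) ∨ ((sB y).1 = j ∧ (sB y).2.1 = i)) :
    ∃ R : Finset (Fin m → ZMod 2),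
      2 ^ (m - Nat.clog 2 m) ≤ R.card ∧
      (∃ c : G.ConnectedComponent, (m : ℕ) / 2 < c.supp.ncard) ∧
      (∀ i j : Fin m, G.Adj i j → ∀ r ∈ R, ∀ r' ∈ R, r i + r j = r' i + r' j) :=
  matching_game_winning_strategy_gives_R_general m hme sA sB hwin G hG
end

section
/- Let m > 0 be an even integer and let G be a simple graph on the vertex set {0,…,m−1} in which every connected component has cardinality at most m/2. Then there exists a perfect matching on {0,…,m−1}, i.e. a fixed-point-free involution y : Fin m → Fin m, such that for every vertex i, the vertices i and y i lie in different connected components of G. -/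
/-!
Label the vertices by their components and list them in an order that sorts the labels
(any linear order on the components will do), so that every component occupies an interval
of positions. With `m = n + n`, pair the position `i < n` with the position `n + i`: the
interval from `i` to `n + i` has `n + 1` positions, more than any component holds, so the
two ends lie in different components.
-/

open Set

theorem finAddFlip_involutive (n : ℕ) : Function.Involutive (finAddFlip : Fin (n + n) → _) := by
  intro k
  induction k using Fin.addCases with
  | left i => rw [finAddFlip_apply_castAdd, finAddFlip_apply_natAdd]
  | right i => rw [finAddFlip_apply_natAdd, finAddFlip_apply_castAdd]

theorem finAddFlip_ne_self {n : ℕ} (k : Fin (n + n)) : finAddFlip k ≠ k := by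
  induction k using Fin.addCases with
  | left i =>
    rw [finAddFlip_apply_castAdd, Ne, Fin.ext_iff, Fin.val_natAdd, Fin.val_castAdd]
    omega
  | right i =>
    rw [finAddFlip_apply_natAdd, Ne, Fin.ext_iff, Fin.val_natAdd, Fin.val_castAdd]
    omega

theorem Monotone.apply_ne_of_fiber_ncard_le {α : Type*} [PartialOrder α] {m n : ℕ}
    {f : Fin m → α} (hf : Monotone f) (hfib : ∀ v, {w | f w = f v}.ncard ≤ n)
    {a b : Fin m} (hab : (a : ℕ) + n ≤ b) : f a ≠ f b := by
  intro hfab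
  have hsub : Icc a b ⊆ {w | f w = f a} := fun j hj =>
    le_antisymm (hfab ▸ hf hj.2) (hf hj.1)
  have hcard : (Icc a b).ncard = b + 1 - a := by
    rw [← Finset.coe_Icc, ncard_coe_finset, Fin.card_Icc]
  have := ncard_le_ncard hsub (toFinite _)
  have := hfib a
  omega

theorem Monotone.apply_finAddFlip_ne {α : Type*} [PartialOrder α] {n : ℕ}
    {f : Fin (n + n) → α} (hf : Monotone f) (hfib : ∀ v, {w | f w = f v}.ncard ≤ n)
    (k : Fin (n + n)) : f (finAddFlip k) ≠ f k := by
  induction k using Fin.addCases with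
  | left i =>
    rw [finAddFlip_apply_castAdd]
    exact (hf.apply_ne_of_fiber_ncard_le hfib (by simp [Nat.add_comm])).symm
  | right i =>
    rw [finAddFlip_apply_natAdd]
    exact hf.apply_ne_of_fiber_ncard_le hfib (by simp [Nat.add_comm])

theorem Fin.exists_involutive_forall_ne_self_forall_apply_ne {α : Type*} {n : ℕ}
    (c : Fin (n + n) → α) (hc : ∀ v, {w | c w = c v}.ncard ≤ n) :
    ∃ y : Fin (n + n) → Fin (n + n),
      Function.Involutive y ∧ (∀ i, y i ≠ i) ∧ ∀ i, c (y i) ≠ c i := by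
  let : LinearOrder α := IsWellOrder.linearOrder WellOrderingRel
  let σ := Tuple.sort c
  have hmono : Monotone (c ∘ σ) := Tuple.monotone_sort c
  have hfib : ∀ k, {j | c (σ j) = c (σ k)}.ncard ≤ n := fun k =>
    (ncard_preimage_of_injective_subset_range σ.injective (by simp)).trans_le (hc (σ k))
  refine ⟨fun v => σ (finAddFlip (σ.symm v)), fun v => ?_, fun v => ?_, fun v => ?_⟩
  · simp [finAddFlip_involutive n _]
  · simpa [σ.eq_symm_apply] using finAddFlip_ne_self (σ.symm v)
  · simpa using hmono.apply_finAddFlip_ne hfib (σ.symm v)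

theorem matching_avoiding_small_components_general (m : ℕ) (hme : Even m)
    (G : SimpleGraph (Fin m))
    (hsmall : ∀ c : G.ConnectedComponent, c.supp.ncard ≤ m / 2) :
    ∃ y : Fin m → Fin m,
      y ∘ y = id ∧ (∀ i, y i ≠ i) ∧ ∀ i, ¬ G.Reachable i (y i) := by
  obtain ⟨n, rfl⟩ := hme
  obtain ⟨y, hinv, hfix, hne⟩ :=
    Fin.exists_involutive_forall_ne_self_forall_apply_ne G.connectedComponentMk fun v => by
      simpa [SimpleGraph.ConnectedComponent.supp, ← Nat.two_mul] using
        hsmall (G.connectedComponentMk v)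
  exact ⟨y, hinv.comp_self, hfix, fun i h => hne i (SimpleGraph.ConnectedComponent.sound h).symm⟩

/-- Let `m > 0` be even and let `G` be a simple graph on `{0, …, m-1}` in which
every connected component has cardinality at most `m/2`.  Then there is a
perfect matching on `{0, …, m-1}` (a fixed-point-free involution
`y : Fin m → Fin m`) such that for every vertex `i`, the vertices `i` and `y i`
lie in different connected components of `G`. -/
theorem matching_avoiding_small_components (m : ℕ) (hm : 0 < m) (hme : Even m)
    (G : SimpleGraph (Fin m))
    (hsmall : ∀ c : G.ConnectedComponent, c.supp.ncard ≤ m / 2) :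
    ∃ y : Fin m → Fin m,
      y ∘ y = id ∧ (∀ i, y i ≠ i) ∧ ∀ i, ¬ G.Reachable i (y i) :=
  matching_avoiding_small_components_general m hme G hsmall
end
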